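/- arXiv:1803.11287 — 2 statements merged into one kernel-verified Lean document; each statement's English description precedes it below -/
import Mathlib

section
/- Let (a_t)_{t≥0} be a nonnegative real sequence satisfying a_{t+1} ≤ (1 − λ/(t+1)) a_t + β/(t+1)² for all t ≥ 0, where λ > 1 and β > 0. Then a_t ≤ Q/(t+1) for all t ≥ 0, where Q = max{a_0, 2a_1, …, (⌊λ⌋+1)a_{⌊λ⌋}, (⌊λ⌋+2)a_{⌊λ⌋+1}, β/(λ−1)}. -/
/-!
Once `n = t + 1 ≥ λ` the coefficient `1 - λ/n` is nonnegative, so the bound `a t ≤ Q/n`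
propagates: `(1 - λ/n) Q/n + β/n² ≤ (n - λ + (λ - 1)) Q/n² = (n - 1) Q/n² ≤ Q/(n + 1)`,
using `β ≤ (λ - 1) Q`. The first `⌊λ⌋ + 2` terms are covered by the definition of `Q`.
-/

lemma one_sub_div_mul_div_add_div_sq_le_div_add_one {lam β Q n : ℝ} (hQ : 0 ≤ Q)
    (hβQ : β ≤ Q * (lam - 1)) (hn : 0 < n) :
    (1 - lam / n) * (Q / n) + β / n ^ 2 ≤ Q / (n + 1) := by
  calc (1 - lam / n) * (Q / n) + β / n ^ 2
      ≤ (1 - lam / n) * (Q / n) + Q * (lam - 1) / n ^ 2 := by gcongr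
    _ = Q * (n - 1) / n ^ 2 := by field_simp; ring
    _ ≤ Q / (n + 1) := by
      rw [div_le_div_iff₀ (by positivity) (by positivity)]
      nlinarith

lemma le_div_add_one_of_recursion {a : ℕ → ℝ} {lam β Q : ℝ} (N : ℕ)
    (hN : lam ≤ N + 1) (hQ : 0 ≤ Q) (hβQ : β ≤ Q * (lam - 1))
    (hrec : ∀ t ≥ N, a (t + 1) ≤ (1 - lam / ((t : ℝ) + 1)) * a t + β / ((t : ℝ) + 1) ^ 2)
    (hinit : ∀ t ≤ N, a t ≤ Q / ((t : ℝ) + 1)) (t : ℕ) : a t ≤ Q / ((t : ℝ) + 1) := by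
  induction t with
  | zero => exact hinit 0 N.zero_le
  | succ s ih =>
    rcases le_or_gt (s + 1) N with hsN | hNs
    · exact hinit _ hsN
    have hlam : lam ≤ (s : ℝ) + 1 := hN.trans (by exact_mod_cast Nat.succ_le_succ (by omega))
    have hcoef : 0 ≤ 1 - lam / ((s : ℝ) + 1) := by
      rw [sub_nonneg, div_le_one (by positivity)]; exact hlam
    calc a (s + 1) ≤ (1 - lam / ((s : ℝ) + 1)) * a s + β / ((s : ℝ) + 1) ^ 2 :=
          hrec s (by omega)
      _ ≤ (1 - lam / ((s : ℝ) + 1)) * (Q / ((s : ℝ) + 1)) + β / ((s : ℝ) + 1) ^ 2 := by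
          gcongr
      _ ≤ Q / ((s : ℝ) + 1 + 1) :=
          one_sub_div_mul_div_add_div_sq_le_div_add_one hQ hβQ (by positivity)
      _ = Q / (((s + 1 : ℕ) : ℝ) + 1) := by push_cast; rfl

theorem stmt_8 (a : ℕ → ℝ) (lam β : ℝ) (hlam : 1 < lam) (hβ : 0 < β)
    (hrec : ∀ t : ℕ, a (t + 1) ≤ (1 - lam / ((t : ℝ) + 1)) * a t + β / ((t : ℝ) + 1) ^ 2)
    (Q : ℝ)
    (hQ : Q = max (β / (lam - 1))
        ((Finset.range (Nat.floor lam + 2)).sup'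
          (Finset.nonempty_range_iff.mpr (by omega)) (fun i => ((i : ℝ) + 1) * a i))) :
    ∀ t : ℕ, a t ≤ Q / ((t : ℝ) + 1) := by
  have hβQ : β / (lam - 1) ≤ Q := hQ ▸ le_max_left _ _
  have hQ0 : 0 ≤ Q := (div_pos hβ (by linarith)).le.trans hβQ
  have hinit : ∀ t ≤ Nat.floor lam + 1, a t ≤ Q / ((t : ℝ) + 1) := by
    intro t ht
    rw [le_div_iff₀ (by positivity), mul_comm, hQ]
    exact (Finset.le_sup' (fun i : ℕ => ((i : ℝ) + 1) * a i)
      (Finset.mem_range.mpr (by omega))).trans (le_max_right _ _)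
  have hN : lam ≤ ((Nat.floor lam + 1 : ℕ) : ℝ) + 1 := by
    push_cast; linarith [Nat.lt_floor_add_one lam]
  exact le_div_add_one_of_recursion _ hN hQ0
    (by rwa [div_le_iff₀ (by linarith)] at hβQ) (fun t _ => hrec t) hinit
end

section
/- Let θ ≥ 0 and define b̄_1 = 0 and b̄_i = iθ((i−1)² D + ∑_{j=1}^{i−1} b̄_j) for i ≥ 2, where D ≥ 0. Then ∑_{i=1}^L b̄_i ≤ θ D L (L−1)³ (1 + Lθ)^L. -/
theorem stmt_14 (θ D : ℝ) (hθ : 0 ≤ θ) (hD : 0 ≤ D) (L : ℕ) (hL : 1 ≤ L)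
    (bbar : ℕ → ℝ) (h1 : bbar 1 = 0)
    (hrec : ∀ i : ℕ, 2 ≤ i →
      bbar i = (i : ℝ) * θ * (((i : ℝ) - 1) ^ 2 * D + ∑ j ∈ Finset.Ico 1 i, bbar j)) :
    ∑ i ∈ Finset.Icc 1 L, bbar i ≤ θ * D * L * ((L : ℝ) - 1) ^ 3 * (1 + L * θ) ^ L := by
  have hθD : (0:ℝ) ≤ θ * D := mul_nonneg hθ hD
  -- nonnegativity of partial sums
  have hSnn : ∀ n : ℕ, 0 ≤ ∑ i ∈ Finset.Icc 1 n, bbar i := by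
    intro n
    induction n with
    | zero => simp
    | succ m ih =>
      rw [Finset.sum_Icc_succ_top (by omega)]
      have hb : 0 ≤ bbar (m + 1) := by
        rcases Nat.eq_zero_or_pos m with hm | hm
        · subst hm; simp [h1]
        · rw [hrec (m + 1) (by omega), Finset.Ico_add_one_right_eq_Icc]
          have h2 : (0:ℝ) ≤ ((m+1:ℕ):ℝ) * θ := by positivity
          have h3 : (0:ℝ) ≤ (((m+1:ℕ):ℝ) - 1)^2 * D := by positivity
          exact mul_nonneg h2 (by linarith)
      linarith
  induction L, hL using Nat.le_induction with
  | base => simp [h1]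
  | succ l hl ih =>
    have hl1 : (1:ℝ) ≤ (l:ℝ) := by exact_mod_cast hl
    have hc3 : (0:ℝ) ≤ ((l:ℝ) - 1)^3 := pow_nonneg (by linarith) 3
    have hS : ∑ i ∈ Finset.Icc 1 (l+1), bbar i
        = (1 + ((l:ℝ)+1)*θ) * (∑ i ∈ Finset.Icc 1 l, bbar i) + θ*D*((l:ℝ)+1)*(l:ℝ)^2 := by
      rw [Finset.sum_Icc_succ_top (by omega), hrec (l+1) (by omega), Finset.Ico_add_one_right_eq_Icc]
      push_cast
      ring
    set S := ∑ i ∈ Finset.Icc 1 l, bbar i with hSdef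
    have ihl := ih
    have hpow : (1 + (l:ℝ)*θ)^l ≤ (1 + ((l:ℝ)+1)*θ)^l := by
      apply pow_le_pow_left₀ (by positivity)
      nlinarith
    have hP : (1:ℝ) ≤ (1 + ((l:ℝ)+1)*θ)^(l+1) := by
      apply one_le_pow₀
      nlinarith
    have hbase : (0:ℝ) ≤ 1 + ((l:ℝ)+1)*θ := by positivity
    have step1 : (1 + ((l:ℝ)+1)*θ) * S
        ≤ θ * D * (l:ℝ) * ((l:ℝ) - 1)^3 * (1 + ((l:ℝ)+1)*θ)^(l+1) := by
      calc (1 + ((l:ℝ)+1)*θ) * S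
          ≤ (1 + ((l:ℝ)+1)*θ) * (θ * D * (l:ℝ) * ((l:ℝ) - 1)^3 * (1 + (l:ℝ)*θ)^l) :=
            mul_le_mul_of_nonneg_left ihl hbase
        _ ≤ (1 + ((l:ℝ)+1)*θ) * (θ * D * (l:ℝ) * ((l:ℝ) - 1)^3 * (1 + ((l:ℝ)+1)*θ)^l) := by
            apply mul_le_mul_of_nonneg_left _ hbase
            apply mul_le_mul_of_nonneg_left hpow
            have h4 : (0:ℝ) ≤ θ * D * (l:ℝ) :=
              mul_nonneg hθD (Nat.cast_nonneg l)
            exact mul_nonneg h4 hc3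
        _ = θ * D * (l:ℝ) * ((l:ℝ) - 1)^3 * (1 + ((l:ℝ)+1)*θ)^(l+1) := by ring
    rw [hS]
    have hc : ((l:ℝ)+1)*(l:ℝ)^2 ≤ ((l:ℝ)+1)*(l:ℝ)^3 - (l:ℝ)*((l:ℝ)-1)^3 := by
      nlinarith [hl1, sq_nonneg ((l:ℝ)-1)]
    have hcn : (0:ℝ) ≤ ((l:ℝ)+1)*(l:ℝ)^3 - (l:ℝ)*((l:ℝ)-1)^3 :=
      le_trans (by positivity) hc
    have key : θ*D*(((l:ℝ)+1)*(l:ℝ)^2)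
        ≤ θ*D*(((l:ℝ)+1)*(l:ℝ)^3 - (l:ℝ)*((l:ℝ)-1)^3) * (1 + ((l:ℝ)+1)*θ)^(l+1) := by
      calc θ*D*(((l:ℝ)+1)*(l:ℝ)^2)
          ≤ θ*D*(((l:ℝ)+1)*(l:ℝ)^3 - (l:ℝ)*((l:ℝ)-1)^3) :=
            mul_le_mul_of_nonneg_left hc hθD
        _ ≤ θ*D*(((l:ℝ)+1)*(l:ℝ)^3 - (l:ℝ)*((l:ℝ)-1)^3) * (1 + ((l:ℝ)+1)*θ)^(l+1) :=
            le_mul_of_one_le_right (mul_nonneg hθD hcn) hP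
    have hfin : (1 + ((l:ℝ)+1)*θ) * S + θ*D*((l:ℝ)+1)*(l:ℝ)^2
        ≤ θ * D * ((l:ℝ)+1) * ((l:ℝ)+1-1)^3 * (1 + ((l:ℝ)+1)*θ)^(l+1) := by
      nlinarith [key, step1]
    calc (1 + ((l:ℝ)+1)*θ) * S + θ*D*((l:ℝ)+1)*(l:ℝ)^2
        ≤ θ * D * ((l:ℝ)+1) * ((l:ℝ)+1-1)^3 * (1 + ((l:ℝ)+1)*θ)^(l+1) := hfin
      _ = θ * D * ((l+1:ℕ):ℝ) * (((l+1:ℕ):ℝ) - 1)^3 * (1 + ((l+1:ℕ):ℝ)*θ)^(l+1) := by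
          push_cast; ring
end
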